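/- (Existence of a symmetric solution.) Let K₁, K₂ ∈ ℝ and L₁, L₂ ∈ ℝ \ {0}. There exists r ∈ (0,1) such that (r₁, r₂) = (r, r) satisfies the self-consistency equations r = V((K₁ + L₁)·r) and r = V((K₂ + L₂)·r) if and only if K₁ + L₁ > 2 and K₁ + L₁ = K₂ + L₂. -/
import Mathlib


open Real Set

/-- The function `V(x) = (∫ cos θ e^{x cos θ} dθ) / (∫ e^{x cos θ} dθ)` over `[0, 2π]`. -/
noncomputable def V (x : ℝ) : ℝ :=
  (∫ θ in (0:ℝ)..(2 * π), Real.cos θ * Real.exp (x * Real.cos θ)) /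
  (∫ θ in (0:ℝ)..(2 * π), Real.exp (x * Real.cos θ))

open intervalIntegral MeasureTheory

noncomputable def DD (x : ℝ) : ℝ := ∫ θ in (0:ℝ)..(2 * π), Real.exp (x * Real.cos θ)
noncomputable def NN (x : ℝ) : ℝ := ∫ θ in (0:ℝ)..(2 * π), Real.cos θ * Real.exp (x * Real.cos θ)
noncomputable def SS (x : ℝ) : ℝ := ∫ θ in (0:ℝ)..(2 * π), Real.sin θ ^ 2 * Real.exp (x * Real.cos θ)

lemma V_def (x : ℝ) : V x = NN x / DD x := rfl

lemma two_pi_pos' : (0:ℝ) < 2 * π := by positivity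

lemma DD_cont : Continuous DD := by
  apply intervalIntegral.continuous_parametric_intervalIntegral_of_continuous'
    (f := fun x θ => Real.exp (x * Real.cos θ))
  show Continuous fun p : ℝ × ℝ => Real.exp (p.1 * Real.cos p.2)
  fun_prop

lemma NN_cont : Continuous NN := by
  apply intervalIntegral.continuous_parametric_intervalIntegral_of_continuous'
    (f := fun x θ => Real.cos θ * Real.exp (x * Real.cos θ))
  show Continuous fun p : ℝ × ℝ => Real.cos p.2 * Real.exp (p.1 * Real.cos p.2)
  fun_prop

lemma SS_cont : Continuous SS := by
  apply intervalIntegral.continuous_parametric_intervalIntegral_of_continuous'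
    (f := fun x θ => Real.sin θ ^ 2 * Real.exp (x * Real.cos θ))
  show Continuous fun p : ℝ × ℝ => Real.sin p.2 ^ 2 * Real.exp (p.1 * Real.cos p.2)
  fun_prop

lemma DD_pos (x : ℝ) : 0 < DD x :=
  intervalIntegral_pos_of_pos ((by fun_prop : Continuous fun θ => Real.exp (x * Real.cos θ)).intervalIntegrable _ _)
    (fun θ => exp_pos _) two_pi_pos'

lemma V_cont : Continuous V := by
  rw [show V = fun x => NN x / DD x from rfl]
  exact NN_cont.div DD_cont fun x => (DD_pos x).ne'

lemma NN_zero : NN 0 = 0 := by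
  have : NN 0 = ∫ θ in (0:ℝ)..(2 * π), Real.cos θ := by
    apply intervalIntegral.integral_congr
    intro θ _
    simp
  rw [this, integral_cos, Real.sin_two_pi, Real.sin_zero, sub_zero]

lemma V_zero : V 0 = 0 := by rw [V_def, NN_zero, zero_div]

lemma NN_lt_DD (x : ℝ) : NN x < DD x := by
  apply intervalIntegral.integral_lt_integral_of_continuousOn_of_le_of_exists_lt two_pi_pos'
  · fun_prop
  · fun_prop
  · intro θ _
    have h1 : Real.cos θ ≤ 1 := Real.cos_le_one θ
    nlinarith [Real.exp_pos (x * Real.cos θ)]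
  · refine ⟨π, ⟨Real.pi_pos.le, by linarith [Real.pi_pos]⟩, ?_⟩
    rw [Real.cos_pi]
    nlinarith [Real.exp_pos (x * (-1:ℝ))]

lemma V_lt_one (x : ℝ) : V x < 1 := by
  rw [V_def, div_lt_one (DD_pos x)]
  exact NN_lt_DD x

lemma NN_eq (x : ℝ) : NN x = x * SS x := by
  have key := intervalIntegral.integral_mul_deriv_eq_deriv_mul
    (a := (0:ℝ)) (b := 2 * π)
    (u := fun θ => Real.exp (x * Real.cos θ)) (v := Real.sin)
    (u' := fun θ => Real.exp (x * Real.cos θ) * (x * -Real.sin θ)) (v' := Real.cos)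
    (fun θ _ => ((Real.hasDerivAt_cos θ).const_mul x).exp)
    (fun θ _ => Real.hasDerivAt_sin θ)
    ((by fun_prop : Continuous fun θ => Real.exp (x * Real.cos θ) * (x * -Real.sin θ)).intervalIntegrable _ _)
    (Real.continuous_cos.intervalIntegrable _ _)
  have h1 : NN x = ∫ θ in (0:ℝ)..(2 * π), Real.exp (x * Real.cos θ) * Real.cos θ :=
    intervalIntegral.integral_congr fun θ _ => by ring
  have h2 : (∫ θ in (0:ℝ)..(2 * π), Real.exp (x * Real.cos θ) * (x * -Real.sin θ) * Real.sin θ)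
      = -(x * SS x) := by
    have : (∫ θ in (0:ℝ)..(2 * π), Real.exp (x * Real.cos θ) * (x * -Real.sin θ) * Real.sin θ)
        = ∫ θ in (0:ℝ)..(2 * π), -(x * (Real.sin θ ^ 2 * Real.exp (x * Real.cos θ))) :=
      intervalIntegral.integral_congr fun θ _ => by ring
    rw [this, intervalIntegral.integral_neg, intervalIntegral.integral_const_mul]
    rfl
  rw [h1, key, h2, Real.sin_two_pi, Real.sin_zero]
  ring

lemma exp_add_exp_neg_lt {s t : ℝ} (h : |s| < |t|) :
    Real.exp s + Real.exp (-s) < Real.exp t + Real.exp (-t) := by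
  have := Real.cosh_lt_cosh.mpr h
  rw [Real.cosh_eq, Real.cosh_eq] at this
  linarith

lemma A_pos {x : ℝ} (hx : 0 < x) :
    0 < ∫ θ in (0:ℝ)..(2 * π), Real.cos (2 * θ) * Real.exp (x * Real.cos θ) := by
  set f : ℝ → ℝ := fun θ => Real.cos (2 * θ) * Real.exp (x * Real.cos θ) with hf_def
  have hf : Continuous f := by fun_prop
  set f2 : ℝ → ℝ := fun θ =>
    Real.cos (2 * θ) * (Real.exp (x * Real.cos θ) + Real.exp (-(x * Real.cos θ))) with hf2_def
  have hf2 : Continuous f2 := by fun_prop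
  set f3 : ℝ → ℝ := fun θ =>
    Real.cos (2 * θ) * ((Real.exp (x * Real.cos θ) + Real.exp (-(x * Real.cos θ)))
      - (Real.exp (x * Real.sin θ) + Real.exp (-(x * Real.sin θ)))) with hf3_def
  have pi_pos := Real.pi_pos
  -- step 1 : reduce to [0, π]
  have e1 : (∫ θ in (0:ℝ)..(2 * π), f θ) = ∫ θ in (0:ℝ)..π, f2 θ := by
    have hsub : (∫ θ in (0:ℝ)..π, f (θ + π)) = ∫ θ in π..(2 * π), f θ := by
      rw [intervalIntegral.integral_comp_add_right (a := (0:ℝ)) (b := π) f π, zero_add,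
        show π + π = 2 * π by ring]
    have hI2 : IntervalIntegrable (fun θ => f (θ + π)) volume 0 π :=
      (hf.comp (continuous_add_right π)).intervalIntegrable _ _
    rw [← intervalIntegral.integral_add_adjacent_intervals
      (hf.intervalIntegrable 0 π) (hf.intervalIntegrable π (2 * π)), ← hsub,
      ← intervalIntegral.integral_add (hf.intervalIntegrable 0 π) hI2]
    apply intervalIntegral.integral_congr
    intro θ _
    show f θ + f (θ + π) = f2 θ
    simp only [hf_def, hf2_def]
    rw [show 2 * (θ + π) = 2 * θ + 2 * π by ring, Real.cos_add_two_pi, Real.cos_add_pi]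
    ring_nf
  -- step 2 : reduce to [0, π/2]
  have e2 : (∫ θ in (0:ℝ)..π, f2 θ) = 2 * ∫ θ in (0:ℝ)..(π / 2), f2 θ := by
    have hsub : (∫ θ in (0:ℝ)..(π / 2), f2 (π - θ)) = ∫ θ in (π / 2)..π, f2 θ := by
      rw [intervalIntegral.integral_comp_sub_left (a := (0:ℝ)) (b := π / 2) f2 π, sub_zero,
        show π - π / 2 = π / 2 by ring]
    have hcongr : (∫ θ in (0:ℝ)..(π / 2), f2 (π - θ)) = ∫ θ in (0:ℝ)..(π / 2), f2 θ := by
      apply intervalIntegral.integral_congr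
      intro θ _
      simp only [hf2_def]
      rw [show 2 * (π - θ) = 2 * π - 2 * θ by ring, Real.cos_two_pi_sub, Real.cos_pi_sub]
      ring_nf
    rw [← intervalIntegral.integral_add_adjacent_intervals
      (hf2.intervalIntegrable 0 (π / 2)) (hf2.intervalIntegrable (π / 2) π), ← hsub, hcongr]
    ring
  -- step 3 : reduce to [0, π/4]
  have e3 : (∫ θ in (0:ℝ)..(π / 2), f2 θ) = ∫ θ in (0:ℝ)..(π / 4), f3 θ := by
    have hsub : (∫ θ in (0:ℝ)..(π / 4), f2 (π / 2 - θ)) = ∫ θ in (π / 4)..(π / 2), f2 θ := by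
      rw [intervalIntegral.integral_comp_sub_left (a := (0:ℝ)) (b := π / 4) f2 (π / 2), sub_zero,
        show π / 2 - π / 4 = π / 4 by ring]
    have hI2 : IntervalIntegrable (fun θ => f2 (π / 2 - θ)) volume 0 (π / 4) :=
      (hf2.comp (continuous_const.sub continuous_id)).intervalIntegrable _ _
    rw [← intervalIntegral.integral_add_adjacent_intervals
      (hf2.intervalIntegrable 0 (π / 4)) (hf2.intervalIntegrable (π / 4) (π / 2)), ← hsub,
      ← intervalIntegral.integral_add (hf2.intervalIntegrable 0 (π / 4)) hI2]
    apply intervalIntegral.integral_congr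
    intro θ _
    show f2 θ + f2 (π / 2 - θ) = f3 θ
    simp only [hf2_def, hf3_def]
    rw [show 2 * (π / 2 - θ) = π - 2 * θ by ring, Real.cos_pi_sub, Real.cos_pi_div_two_sub]
    ring_nf
  -- step 4 : positivity on (0, π/4)
  have e4 : 0 < ∫ θ in (0:ℝ)..(π / 4), f3 θ := by
    apply intervalIntegral_pos_of_pos_on
      ((by fun_prop : Continuous f3).intervalIntegrable _ _)
    · intro θ hθ
      obtain ⟨h0, h4⟩ := hθ
      have hsin : 0 < Real.sin θ := Real.sin_pos_of_pos_of_lt_pi h0 (by linarith)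
      have hsc : Real.sin θ < Real.cos θ := by
        rw [← Real.cos_pi_div_two_sub θ]
        apply Real.cos_lt_cos_of_nonneg_of_le_pi (by linarith) (by linarith) (by linarith)
      have hcos2 : 0 < Real.cos (2 * θ) :=
        Real.cos_pos_of_mem_Ioo ⟨by linarith, by linarith⟩
      have hlt : Real.exp (x * Real.sin θ) + Real.exp (-(x * Real.sin θ))
          < Real.exp (x * Real.cos θ) + Real.exp (-(x * Real.cos θ)) := by
        apply exp_add_exp_neg_lt
        rw [abs_of_pos (by positivity), abs_of_pos (by nlinarith)]
        nlinarith
      simp only [hf3_def]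
      nlinarith
    · linarith
  calc (0:ℝ) < 2 * ∫ θ in (0:ℝ)..(π / 4), f3 θ := by linarith
    _ = ∫ θ in (0:ℝ)..(2 * π), f θ := by rw [e1, e2, e3]

lemma A_eq (x : ℝ) :
    (∫ θ in (0:ℝ)..(2 * π), Real.cos (2 * θ) * Real.exp (x * Real.cos θ)) = DD x - 2 * SS x := by
  have h : (fun θ => Real.cos (2 * θ) * Real.exp (x * Real.cos θ))
      = fun θ => Real.exp (x * Real.cos θ) - 2 * (Real.sin θ ^ 2 * Real.exp (x * Real.cos θ)) := by
    funext θ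
    have hpy := Real.sin_sq_add_cos_sq θ
    rw [Real.cos_two_mul]
    linear_combination 2 * Real.exp (x * Real.cos θ) * hpy
  rw [h, intervalIntegral.integral_sub
      ((by fun_prop : Continuous fun θ => Real.exp (x * Real.cos θ)).intervalIntegrable _ _)
      ((by fun_prop : Continuous fun θ =>
        2 * (Real.sin θ ^ 2 * Real.exp (x * Real.cos θ))).intervalIntegrable _ _),
    intervalIntegral.integral_const_mul]
  rfl

lemma V_lt_half {x : ℝ} (hx : 0 < x) : V x < x / 2 := by
  have hA := A_pos hx
  rw [A_eq] at hA
  have hD := DD_pos x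
  rw [V_def, NN_eq, div_lt_iff₀ hD]
  nlinarith

lemma integral_comb {f1 f2 f3 f4 : ℝ → ℝ} (h1 : Continuous f1) (h2 : Continuous f2)
    (h3 : Continuous f3) (h4 : Continuous f4) (c1 c2 c3 c4 : ℝ) :
    (∫ θ in (0:ℝ)..(2 * π), (c1 * f1 θ - c2 * f2 θ - c3 * f3 θ + c4 * f4 θ))
      = c1 * (∫ θ in (0:ℝ)..(2 * π), f1 θ) - c2 * (∫ θ in (0:ℝ)..(2 * π), f2 θ)
        - c3 * (∫ θ in (0:ℝ)..(2 * π), f3 θ) + c4 * (∫ θ in (0:ℝ)..(2 * π), f4 θ) := by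
  rw [intervalIntegral.integral_add, intervalIntegral.integral_sub, intervalIntegral.integral_sub,
    intervalIntegral.integral_const_mul, intervalIntegral.integral_const_mul,
    intervalIntegral.integral_const_mul, intervalIntegral.integral_const_mul]
  all_goals
    apply Continuous.intervalIntegrable
    fun_prop

lemma NN_DD_mono {x y : ℝ} (hxy : x < y) : NN x * DD y < NN y * DD x := by
  set g : ℝ → ℝ → ℝ := fun θ φ => (Real.cos θ - Real.cos φ) *
    (Real.exp (y * Real.cos θ + x * Real.cos φ) - Real.exp (x * Real.cos θ + y * Real.cos φ))
    with hg
  have hg_nonneg : ∀ θ φ, 0 ≤ g θ φ := by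
    intro θ φ
    simp only [hg]
    rcases le_total (Real.cos φ) (Real.cos θ) with h | h
    · exact mul_nonneg (by linarith) (sub_nonneg.2 (Real.exp_le_exp.2 (by nlinarith)))
    · have h2 : Real.exp (y * Real.cos θ + x * Real.cos φ)
          ≤ Real.exp (x * Real.cos θ + y * Real.cos φ) := Real.exp_le_exp.2 (by nlinarith)
      nlinarith
  set H : ℝ → ℝ := fun θ => DD x * (Real.cos θ * Real.exp (y * Real.cos θ))
    - DD y * (Real.cos θ * Real.exp (x * Real.cos θ))
    - NN x * Real.exp (y * Real.cos θ) + NN y * Real.exp (x * Real.cos θ) with hH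
  have dx : (∫ θ in (0:ℝ)..(2 * π), Real.exp (x * Real.cos θ)) = DD x := rfl
  have dy : (∫ θ in (0:ℝ)..(2 * π), Real.exp (y * Real.cos θ)) = DD y := rfl
  have nx : (∫ θ in (0:ℝ)..(2 * π), Real.cos θ * Real.exp (x * Real.cos θ)) = NN x := rfl
  have ny : (∫ θ in (0:ℝ)..(2 * π), Real.cos θ * Real.exp (y * Real.cos θ)) = NN y := rfl
  have hrep : ∀ θ, H θ = ∫ φ in (0:ℝ)..(2 * π), g θ φ := by
    intro θ
    have hfe : (fun φ => g θ φ) = fun φ =>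
        (Real.cos θ * Real.exp (y * Real.cos θ)) * Real.exp (x * Real.cos φ)
        - (Real.cos θ * Real.exp (x * Real.cos θ)) * Real.exp (y * Real.cos φ)
        - Real.exp (y * Real.cos θ) * (Real.cos φ * Real.exp (x * Real.cos φ))
        + Real.exp (x * Real.cos θ) * (Real.cos φ * Real.exp (y * Real.cos φ)) := by
      funext φ
      simp only [hg, Real.exp_add]
      ring
    rw [hfe, integral_comb (by fun_prop) (by fun_prop) (by fun_prop) (by fun_prop),
      dx, dy, nx, ny]
    simp only [hH]
    ring
  have hH_nonneg : ∀ θ, 0 ≤ H θ := fun θ => (hrep θ) ▸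
    intervalIntegral.integral_nonneg two_pi_pos'.le (fun φ _ => hg_nonneg θ φ)
  have hH_pos : 0 < H (π / 2) := by
    rw [hrep]
    apply intervalIntegral.integral_pos two_pi_pos'
      (Continuous.continuousOn (by fun_prop)) (fun φ _ => hg_nonneg _ φ)
    refine ⟨0, ⟨le_rfl, two_pi_pos'.le⟩, ?_⟩
    simp only [hg, Real.cos_pi_div_two, Real.cos_zero, mul_zero, mul_one, zero_add, zero_sub,
      add_zero]
    nlinarith [Real.exp_lt_exp.2 hxy]
  have total : 0 < ∫ θ in (0:ℝ)..(2 * π), H θ := by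
    apply intervalIntegral.integral_pos two_pi_pos' (Continuous.continuousOn (by fun_prop))
      (fun θ _ => hH_nonneg θ)
    exact ⟨π / 2, ⟨by positivity, by linarith [Real.pi_pos]⟩, hH_pos⟩
  have expand : (∫ θ in (0:ℝ)..(2 * π), H θ) = 2 * (NN y * DD x - NN x * DD y) := by
    simp only [hH]
    rw [integral_comb (by fun_prop) (by fun_prop) (by fun_prop) (by fun_prop),
      dx, dy, nx, ny]
    ring
  rw [expand] at total
  linarith

lemma V_strictMono : StrictMono V := by
  intro x y hxy
  rw [V_def, V_def, div_lt_div_iff₀ (DD_pos x) (DD_pos y)]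
  exact NN_DD_mono hxy

lemma V_as_mul (x : ℝ) : V x = x * (SS x / DD x) := by
  rw [V_def, NN_eq]
  ring

lemma exists_fixed {a : ℝ} (ha : 2 < a) : ∃ r ∈ Ioo (0:ℝ) 1, r = V (a * r) := by
  have pi_pos := Real.pi_pos
  have ha0 : (0:ℝ) < a := by linarith
  set F : ℝ → ℝ := fun r => a * (SS (a * r) / DD (a * r)) with hF
  have hFc : Continuous F := by
    apply continuous_const.mul
    exact (SS_cont.comp (continuous_const.mul continuous_id)).div
      (DD_cont.comp (continuous_const.mul continuous_id)) (fun r => (DD_pos _).ne')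
  have hS0 : SS 0 = π := by
    have h : SS 0 = ∫ θ in (0:ℝ)..(2 * π), Real.sin θ ^ 2 := by
      apply intervalIntegral.integral_congr
      intro θ _
      simp
    rw [h, integral_sin_sq]
    simp [Real.sin_two_pi]
  have hD0 : DD 0 = 2 * π := by
    have h : DD 0 = ∫ θ in (0:ℝ)..(2 * π), (1:ℝ) := by
      apply intervalIntegral.integral_congr
      intro θ _
      simp
    rw [h]
    simp
  have hF0 : 1 < F 0 := by
    simp only [hF, mul_zero, hS0, hD0]
    rw [show π / (2 * π) = 1 / 2 by rw [div_eq_div_iff (by positivity) (by norm_num)]; ring]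
    linarith
  have hev : ∀ᶠ r in nhds (0:ℝ), 1 < F r :=
    hFc.continuousAt.eventually (eventually_gt_nhds hF0)
  have hev' : ∀ᶠ r in nhdsWithin (0:ℝ) (Ioi 0), 1 < F r ∧ r ∈ Ioo (0:ℝ) 1 := by
    filter_upwards [hev.filter_mono nhdsWithin_le_nhds,
      Ioo_mem_nhdsGT_of_mem (Set.mem_Ico.2 ⟨le_rfl, zero_lt_one⟩)] with r h1 h2
    exact ⟨h1, h2⟩
  obtain ⟨r₀, hFr₀, hr₀⟩ := hev'.exists
  have hgr₀ : r₀ < V (a * r₀) := by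
    have h : V (a * r₀) = r₀ * F r₀ := by
      rw [V_as_mul, hF]
      ring
    rw [h]
    nlinarith [hr₀.1]
  set G : ℝ → ℝ := fun r => V (a * r) - r with hG
  have hGc : ContinuousOn G (Icc r₀ 1) :=
    ((V_cont.comp (continuous_const.mul continuous_id)).sub continuous_id).continuousOn
  have hG1 : G 1 < 0 := by
    simp only [hG, mul_one]
    have := V_lt_one a
    linarith
  have hG0 : 0 < G r₀ := by
    simp only [hG]
    linarith
  obtain ⟨r, hrmem, hr⟩ := intermediate_value_Ioo' hr₀.2.le hGc ⟨hG1, hG0⟩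
  refine ⟨r, ⟨hr₀.1.trans hrmem.1, hrmem.2⟩, ?_⟩
  simp only [hG] at hr
  linarith

theorem symmetric_solution_iff (K₁ K₂ L₁ L₂ : ℝ) (hL₁ : L₁ ≠ 0) (hL₂ : L₂ ≠ 0) :
    (∃ r : ℝ, r ∈ Ioo (0:ℝ) 1 ∧ r = V ((K₁ + L₁) * r) ∧ r = V ((K₂ + L₂) * r)) ↔
      2 < K₁ + L₁ ∧ K₁ + L₁ = K₂ + L₂ := by
  constructor
  · rintro ⟨r, ⟨hr0, hr1⟩, h1, h2⟩
    have har : 0 < (K₁ + L₁) * r := by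
      by_contra hcon
      push_neg at hcon
      have hle : V ((K₁ + L₁) * r) ≤ V 0 := V_strictMono.monotone hcon
      rw [V_zero] at hle
      linarith
    have ha : 2 < K₁ + L₁ := by
      have hh := V_lt_half har
      rw [← h1] at hh
      nlinarith
    have heq : (K₁ + L₁) * r = (K₂ + L₂) * r :=
      V_strictMono.injective (h1.symm.trans h2)
    exact ⟨ha, mul_right_cancel₀ hr0.ne' heq⟩
  · rintro ⟨ha, heq⟩
    obtain ⟨r, hr, hfix⟩ := exists_fixed ha
    exact ⟨r, hr, hfix, by rw [← heq]; exact hfix⟩
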